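/- arXiv:2006.09138 — 3 statements merged into one kernel-verified Lean document; each statement's English description precedes it below -/
import Mathlib

section
/- Let N ≥ 2, K > 1, C₃ > 0, C₁ > 0 be reals and for each k with 0 ≤ k ≤ ⌊N/2⌋ suppose real numbers T_A^{(k)} and T^{(k)} ≥ 0 satisfy |T_A^{(k)}| ≤ 4C₃e^{C₁}K^N N / (2k)! · D and 0 ≤ T^{(k)} ≤ 2e^{C₁}K^N / (2k)! · D and T^{(0)} ≥ D for some D > 0. Then for any 0 ≤ k₀ < ⌊N/2⌋, |Σ_{k=0}^{⌊N/2⌋} T_A^{(k)} / Σ_{k=0}^{⌊N/2⌋} T^{(k)} − Σ_{k=0}^{k₀} T_A^{(k)} / Σ_{k=0}^{k₀} T^{(k)}| ≤ 16 C₃ e^{2C₁} K^{2N} N (Σ_{k=0}^{k₀} 1/(2k)!) (Σ_{k=k₀+1}^{⌊N/2⌋} 1/(2k)!). -/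
/-! Split both sums at `k₀`: with head sums `a, b` and tail sums `r, s`,
`(a + r) / (b + s) - a / b = (r b - a s) / ((b + s) b)`. The denominator is at least `D²`
because `b ≥ T⁽⁰⁾ ≥ D`, and each product in the numerator is a head bound times a tail bound,
each carrying a factor `D`; the factors `D` cancel and the two `e^{C₁} K^N` combine to
`e^{2C₁} K^{2N}`. -/

open Finset

theorem abs_add_div_add_sub_div_le_div_sq {a r b s D : ℝ} (hD : 0 < D) (hb : D ≤ b)
    (hs : 0 ≤ s) : |(a + r) / (b + s) - a / b| ≤ (|r| * b + |a| * s) / D ^ 2 := by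
  have hb₀ : 0 < b := hD.trans_le hb
  have hbs : 0 < b + s := by linarith
  have hsub : (a + r) / (b + s) - a / b = (r * b - a * s) / ((b + s) * b) := by
    field_simp
    ring
  have hnum : |r * b - a * s| ≤ |r| * b + |a| * s := by
    calc |r * b - a * s| ≤ |r * b| + |a * s| := abs_sub _ _
      _ = |r| * b + |a| * s := by rw [abs_mul, abs_mul, abs_of_pos hb₀, abs_of_nonneg hs]
  have hden : D ^ 2 ≤ (b + s) * b := by nlinarith
  rw [hsub, abs_div, abs_of_pos (mul_pos hbs hb₀)]
  exact div_le_div₀ (by positivity) hnum (by positivity) hden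

theorem abs_add_div_add_sub_div_le {a r b s D α α' β β' : ℝ} (hD : 0 < D) (hb : D ≤ b)
    (hs : 0 ≤ s) (ha : |a| ≤ α * D) (hr : |r| ≤ α' * D) (hb' : b ≤ β * D)
    (hs' : s ≤ β' * D) : |(a + r) / (b + s) - a / b| ≤ α' * β + α * β' := by
  refine (abs_add_div_add_sub_div_le_div_sq hD hb hs).trans ?_
  rw [div_le_iff₀ (by positivity)]
  calc |r| * b + |a| * s ≤ α' * D * (β * D) + α * D * (β' * D) :=
        add_le_add (mul_le_mul hr hb' (hD.le.trans hb) ((abs_nonneg r).trans hr))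
          (mul_le_mul ha hs' hs ((abs_nonneg a).trans ha))
    _ = (α' * β + α * β') * D ^ 2 := by ring

theorem Finset.sum_le_mul_sum_one_div_mul {ι : Type*} {s : Finset ι} {f w : ι → ℝ} {c D : ℝ}
    (h : ∀ k ∈ s, f k ≤ c / w k * D) : ∑ k ∈ s, f k ≤ c * (∑ k ∈ s, 1 / w k) * D :=
  calc ∑ k ∈ s, f k ≤ ∑ k ∈ s, c / w k * D := sum_le_sum h
    _ = c * (∑ k ∈ s, 1 / w k) * D := by
      rw [mul_sum, sum_mul]
      exact sum_congr rfl fun k _ => by ring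

theorem Finset.sum_range_eq_add_sum_Icc {M : Type*} [AddCommMonoid M] (f : ℕ → M) {m n : ℕ}
    (h : m ≤ n) :
    ∑ k ∈ range (n + 1), f k = ∑ k ∈ range (m + 1), f k + ∑ k ∈ Icc (m + 1) n, f k := by
  rw [← Ico_add_one_right_eq_Icc, sum_range_add_sum_Ico f (by omega)]

theorem truncation_error_bound_general (N : ℕ)
    (K C₃ C₁ D : ℝ) (hD : 0 < D)
    (TA T : ℕ → ℝ)
    (hTA : ∀ k ≤ N / 2,
      |TA k| ≤ 4 * C₃ * Real.exp C₁ * K ^ N * N / (Nat.factorial (2 * k)) * D)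
    (hT0 : ∀ k ≤ N / 2, 0 ≤ T k)
    (hT : ∀ k ≤ N / 2,
      T k ≤ 2 * Real.exp C₁ * K ^ N / (Nat.factorial (2 * k)) * D)
    (hTzero : D ≤ T 0)
    (k₀ : ℕ) (hk₀ : k₀ < N / 2) :
    |(∑ k ∈ range (N / 2 + 1), TA k) / (∑ k ∈ range (N / 2 + 1), T k)
      - (∑ k ∈ range (k₀ + 1), TA k) / (∑ k ∈ range (k₀ + 1), T k)|
      ≤ 16 * C₃ * Real.exp (2 * C₁) * K ^ (2 * N) * N
          * (∑ k ∈ range (k₀ + 1), 1 / (Nat.factorial (2 * k) : ℝ))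
          * (∑ k ∈ Icc (k₀ + 1) (N / 2), 1 / (Nat.factorial (2 * k) : ℝ)) := by
  rw [sum_range_eq_add_sum_Icc TA hk₀.le, sum_range_eq_add_sum_Icc T hk₀.le]
  have head : ∀ k ∈ range (k₀ + 1), k ≤ N / 2 := fun k hk => by
    simp only [mem_range] at hk; omega
  have tail : ∀ k ∈ Icc (k₀ + 1) (N / 2), k ≤ N / 2 := fun k hk => (mem_Icc.1 hk).2
  have hb : D ≤ ∑ k ∈ range (k₀ + 1), T k :=
    hTzero.trans (single_le_sum (fun k hk => hT0 k (head k hk)) (by simp))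
  refine (abs_add_div_add_sub_div_le hD hb (sum_nonneg fun k hk => hT0 k (tail k hk))
    ((abs_sum_le_sum_abs _ _).trans (sum_le_mul_sum_one_div_mul fun k hk => hTA k (head k hk)))
    ((abs_sum_le_sum_abs _ _).trans (sum_le_mul_sum_one_div_mul fun k hk => hTA k (tail k hk)))
    (sum_le_mul_sum_one_div_mul fun k hk => hT k (head k hk))
    (sum_le_mul_sum_one_div_mul fun k hk => hT k (tail k hk))).trans_eq ?_
  rw [two_mul C₁, Real.exp_add, two_mul N, pow_add]
  ring

theorem truncation_error_bound (N : ℕ) (hN : 2 ≤ N)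
    (K C₃ C₁ D : ℝ) (hK : 1 < K) (hC₃ : 0 < C₃) (hC₁ : 0 < C₁) (hD : 0 < D)
    (TA T : ℕ → ℝ)
    (hTA : ∀ k ≤ N / 2,
      |TA k| ≤ 4 * C₃ * Real.exp C₁ * K ^ N * N / (Nat.factorial (2 * k)) * D)
    (hT0 : ∀ k ≤ N / 2, 0 ≤ T k)
    (hT : ∀ k ≤ N / 2,
      T k ≤ 2 * Real.exp C₁ * K ^ N / (Nat.factorial (2 * k)) * D)
    (hTzero : D ≤ T 0)
    (k₀ : ℕ) (hk₀ : k₀ < N / 2) :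
    |(∑ k ∈ range (N / 2 + 1), TA k) / (∑ k ∈ range (N / 2 + 1), T k)
      - (∑ k ∈ range (k₀ + 1), TA k) / (∑ k ∈ range (k₀ + 1), T k)|
      ≤ 16 * C₃ * Real.exp (2 * C₁) * K ^ (2 * N) * N
          * (∑ k ∈ range (k₀ + 1), 1 / (Nat.factorial (2 * k) : ℝ))
          * (∑ k ∈ Icc (k₀ + 1) (N / 2), 1 / (Nat.factorial (2 * k) : ℝ)) :=
  truncation_error_bound_general N K C₃ C₁ D hD TA T hTA hT0 hT hTzero k₀ hk₀
end

section
/- Fix N ≥ 1, β_N > 0, constants C₁ > 0 and C₂ > 0, and functions V₀₀, V₁₁, V₀₁: ℝ^d → ℝ with V₀₀(q) − V₁₁(q) ≤ C₁ and 0 < |V₀₁(q)| ≤ C₂ for all q, with β_N = 1/N. Define V(q,ℓ,ℓ') = V_{ℓℓ}(q) if ℓ = ℓ' and (V₀₀(q)+V₁₁(q))/2 if ℓ ≠ ℓ'. Then for every cyclic sequence ℓ ∈ {0,1}^N with exactly 2k kinks occurring at positions i₁ < ⋯ < i_{2k}, and every q ∈ ℝ^{dN}, the ratio e^{−β_N Σ_j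 V(q_j,ℓ_j,ℓ_{j+1})} Π_{j=1}^{2k} sinh(β_N|V₀₁(q_{i_j})|) · Π_{j∉{i₁,…,i_{2k}}} cosh(β_N|V₀₁(q_j)|) divided by e^{−β_N Σ_j V₀₀(q_j)} Π_{j=1}^{N} cosh(β_N|V₀₁(q_j)|) is at most e^{C₁}·(M C₂/N)^{2k}, where M = cosh(C₂ β_N). -/
open Finset

lemma sinh_le_mul_cosh {x : ℝ} (hx : 0 ≤ x) : Real.sinh x ≤ x * Real.cosh x := by
  have hmono : MonotoneOn (fun y : ℝ => y * Real.cosh y - Real.sinh y) (Set.Ici 0) := by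
    apply monotoneOn_of_deriv_nonneg (convex_Ici 0)
    · exact (Continuous.mul continuous_id Real.continuous_cosh).sub
        Real.continuous_sinh |>.continuousOn
    · intro y _
      exact ((differentiable_id.mul Real.differentiable_cosh).sub
        Real.differentiable_sinh).differentiableAt.differentiableWithinAt
    · intro y hy
      rw [interior_Ici] at hy
      have hd : HasDerivAt (fun y : ℝ => y * Real.cosh y - Real.sinh y)
          (1 * Real.cosh y + y * Real.sinh y - Real.cosh y) y :=
        ((hasDerivAt_id y).mul (Real.hasDerivAt_cosh y)).sub (Real.hasDerivAt_sinh y)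
      rw [hd.deriv]
      have : 0 ≤ y * Real.sinh y :=
        mul_nonneg hy.le (Real.sinh_nonneg_iff.mpr hy.le)
      linarith
  have h0 : (0 : ℝ) ∈ Set.Ici (0 : ℝ) := Set.self_mem_Ici
  have := hmono h0 (Set.mem_Ici.mpr hx) hx
  simp only [Real.sinh_zero, Real.cosh_zero, mul_zero, zero_mul, sub_zero, sub_self] at this
  linarith

lemma tanh_le_self {x : ℝ} (hx : 0 ≤ x) : Real.tanh x ≤ x := by
  rw [Real.tanh_eq_sinh_div_cosh, div_le_iff₀ (Real.cosh_pos _)]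
  exact sinh_le_mul_cosh hx

/-- The diagonal/off-diagonal effective potential `V(q,ℓ,ℓ')`. -/
noncomputable def Vpot {d : ℕ} (V₀₀ V₁₁ : (Fin d → ℝ) → ℝ)
    (q : Fin d → ℝ) (ℓ ℓ' : Bool) : ℝ :=
  if ℓ = ℓ' then (if ℓ then V₁₁ q else V₀₀ q) else (V₀₀ q + V₁₁ q) / 2

/-- Pointwise weight-ratio bound (4-11): for a surface index configuration `ℓ`
with exactly `2k` kinks, the ratio of the Boltzmann weight of `ℓ` to that of the
all-zero configuration is at most `e^{C₁} (M C₂ / N)^{2k}` with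
`M = cosh(C₂ β_N)`, `β_N = 1/N`. -/
theorem weight_ratio_bound (d N : ℕ) [NeZero N] (k : ℕ)
    (C₁ C₂ : ℝ) (hC₁ : 0 < C₁) (hC₂ : 0 < C₂)
    (V₀₀ V₁₁ V₀₁ : (Fin d → ℝ) → ℝ)
    (hdiff : ∀ q, V₀₀ q - V₁₁ q ≤ C₁)
    (hoff : ∀ q, 0 < |V₀₁ q| ∧ |V₀₁ q| ≤ C₂)
    (βN : ℝ) (hβN : βN = 1 / (N : ℝ))
    (ℓ : Fin N → Bool)
    (Kset : Finset (Fin N))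
    (hKset : Kset = Finset.univ.filter fun j : Fin N => ℓ j ≠ ℓ (j + 1))
    (hcard : Kset.card = 2 * k)
    (q : Fin N → (Fin d → ℝ)) :
    (Real.exp (-βN * ∑ j : Fin N, Vpot V₀₀ V₁₁ (q j) (ℓ j) (ℓ (j + 1)))
        * (∏ j ∈ Kset, Real.sinh (βN * |V₀₁ (q j)|))
        * (∏ j ∈ Ksetᶜ, Real.cosh (βN * |V₀₁ (q j)|)))
      / (Real.exp (-βN * ∑ j : Fin N, V₀₀ (q j))
        * ∏ j : Fin N, Real.cosh (βN * |V₀₁ (q j)|))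
      ≤ Real.exp C₁ * (Real.cosh (C₂ * βN) * C₂ / (N : ℝ)) ^ (2 * k) := by
  have hN : (0 : ℝ) < (N : ℝ) := by
    exact_mod_cast Nat.pos_of_ne_zero (NeZero.ne N)
  have hβpos : 0 < βN := by rw [hβN]; positivity
  -- rewrite the LHS
  have hsplit : (∏ j : Fin N, Real.cosh (βN * |V₀₁ (q j)|))
      = (∏ j ∈ Kset, Real.cosh (βN * |V₀₁ (q j)|))
        * ∏ j ∈ Ksetᶜ, Real.cosh (βN * |V₀₁ (q j)|) :=
    (Finset.prod_mul_prod_compl Kset _).symm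
  have hTpos : 0 < ∏ j ∈ Kset, Real.cosh (βN * |V₀₁ (q j)|) :=
    Finset.prod_pos fun j _ => Real.cosh_pos _
  have hUpos : 0 < ∏ j ∈ Ksetᶜ, Real.cosh (βN * |V₀₁ (q j)|) :=
    Finset.prod_pos fun j _ => Real.cosh_pos _
  have hLHS : (Real.exp (-βN * ∑ j : Fin N, Vpot V₀₀ V₁₁ (q j) (ℓ j) (ℓ (j + 1)))
        * (∏ j ∈ Kset, Real.sinh (βN * |V₀₁ (q j)|))
        * (∏ j ∈ Ksetᶜ, Real.cosh (βN * |V₀₁ (q j)|)))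
      / (Real.exp (-βN * ∑ j : Fin N, V₀₀ (q j))
        * ∏ j : Fin N, Real.cosh (βN * |V₀₁ (q j)|))
      = Real.exp ((-βN * ∑ j : Fin N, Vpot V₀₀ V₁₁ (q j) (ℓ j) (ℓ (j + 1)))
            - (-βN * ∑ j : Fin N, V₀₀ (q j)))
          * ∏ j ∈ Kset, Real.tanh (βN * |V₀₁ (q j)|) := by
    rw [hsplit, Real.exp_sub]
    rw [Finset.prod_congr rfl (fun j _ => Real.tanh_eq_sinh_div_cosh (βN * |V₀₁ (q j)|)),
      Finset.prod_div_distrib]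
    field_simp
  rw [hLHS]
  -- bound the exponential factor
  have hexp : Real.exp ((-βN * ∑ j : Fin N, Vpot V₀₀ V₁₁ (q j) (ℓ j) (ℓ (j + 1)))
      - (-βN * ∑ j : Fin N, V₀₀ (q j))) ≤ Real.exp C₁ := by
    apply Real.exp_le_exp.mpr
    have harg : (-βN * ∑ j : Fin N, Vpot V₀₀ V₁₁ (q j) (ℓ j) (ℓ (j + 1)))
        - (-βN * ∑ j : Fin N, V₀₀ (q j))
        = βN * ∑ j : Fin N, (V₀₀ (q j) - Vpot V₀₀ V₁₁ (q j) (ℓ j) (ℓ (j + 1))) := by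
      rw [Finset.sum_sub_distrib]
      ring
    rw [harg]
    have hsum : ∑ j : Fin N, (V₀₀ (q j) - Vpot V₀₀ V₁₁ (q j) (ℓ j) (ℓ (j + 1)))
        ≤ (N : ℝ) * C₁ := by
      calc ∑ j : Fin N, (V₀₀ (q j) - Vpot V₀₀ V₁₁ (q j) (ℓ j) (ℓ (j + 1)))
          ≤ ∑ _j : Fin N, C₁ := by
            apply Finset.sum_le_sum
            intro j _
            unfold Vpot
            rcases eq_or_ne (ℓ j) (ℓ (j + 1)) with h | h
            · rw [if_pos h]
              cases hℓ : ℓ j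
              · simp [hℓ]; exact hC₁.le
              · simp [hℓ]; linarith [hdiff (q j)]
            · rw [if_neg h]
              have := hdiff (q j)
              linarith
        _ = (N : ℝ) * C₁ := by simp [mul_comm]
    calc βN * ∑ j : Fin N, (V₀₀ (q j) - Vpot V₀₀ V₁₁ (q j) (ℓ j) (ℓ (j + 1)))
        ≤ βN * ((N : ℝ) * C₁) := by
          exact mul_le_mul_of_nonneg_left hsum hβpos.le
      _ = C₁ := by rw [hβN]; field_simp
  -- bound the tanh product
  have hM : (1 : ℝ) ≤ Real.cosh (C₂ * βN) := Real.one_le_cosh _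
  have hbound : 0 ≤ Real.cosh (C₂ * βN) * C₂ / (N : ℝ) := by positivity
  have hprod : ∏ j ∈ Kset, Real.tanh (βN * |V₀₁ (q j)|)
      ≤ (Real.cosh (C₂ * βN) * C₂ / (N : ℝ)) ^ (2 * k) := by
    rw [← hcard, ← Finset.prod_const]
    apply Finset.prod_le_prod
    · intro j _
      rw [Real.tanh_eq_sinh_div_cosh]
      have hx : 0 ≤ βN * |V₀₁ (q j)| := by positivity
      exact div_nonneg (Real.sinh_nonneg_iff.mpr hx) (Real.cosh_pos _).le
    · intro j _
      have hx : 0 ≤ βN * |V₀₁ (q j)| := by positivity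
      calc Real.tanh (βN * |V₀₁ (q j)|) ≤ βN * |V₀₁ (q j)| := tanh_le_self hx
        _ ≤ βN * C₂ := mul_le_mul_of_nonneg_left (hoff (q j)).2 hβpos.le
        _ = C₂ / (N : ℝ) := by rw [hβN]; ring
        _ ≤ Real.cosh (C₂ * βN) * C₂ / (N : ℝ) := by
            rw [div_le_div_iff₀ hN hN]
            nlinarith [mul_le_mul_of_nonneg_right hM (mul_nonneg hC₂.le hN.le)]
  have htanh_nonneg : 0 ≤ ∏ j ∈ Kset, Real.tanh (βN * |V₀₁ (q j)|) := by
    apply Finset.prod_nonneg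
    intro j _
    rw [Real.tanh_eq_sinh_div_cosh]
    have hx : 0 ≤ βN * |V₀₁ (q j)| := by positivity
    exact div_nonneg (Real.sinh_nonneg_iff.mpr hx) (Real.cosh_pos _).le
  exact mul_le_mul hexp hprod htanh_nonneg (Real.exp_pos _).le
end

section
/- Under the assumptions of the previous weight-ratio bound, the function B_k(q) := Σ_{|ℓ|=2k} [weight ratio of ℓ relative to the all-zero sequence ℓ₀] satisfies the uniform bound |B_k(q)| ≤ 2·C(N,2k)·e^{C₁}·(C/N)^{2k} ≤ 2 C^N e^{C₁}/(2k)!, where C = M C₂ with M = cosh(C₂/N). -/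
/-!
Dividing by the reference weight, the weight ratio of a configuration `ℓ` factors as
`exp (βN ∑ⱼ (V₀₀ - V(ℓⱼ, ℓⱼ₊₁)))` times the product of `tanh (βN |V₀₁|)` over the kinks of `ℓ`.
The exponential is at most `e^{C₁}`, and each kink contributes at most `C₂ / N ≤ C / N`,
since `tanh x ≤ x`. A cyclic configuration is determined by `ℓ 0` and its set of kinks, so at most
`2 C(N, 2k)` configurations have `2k` kinks, and `C(N, 2k) ≤ N^{2k} / (2k)!`.
-/

open Finset Nat

/-- Number of kinks of the cyclic configuration `ℓ`. -/
def kinkCount {N : ℕ} [NeZero N] (ℓ : Fin N → Bool) : ℕ :=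
  (Finset.univ.filter fun j : Fin N => ℓ j ≠ ℓ (j + 1)).card

/-- The weight ratio of the configuration `ℓ` relative to the all-zero
configuration `ℓ₀`. -/
noncomputable def weightRatio {d N : ℕ} [NeZero N]
    (V₀₀ V₁₁ V₀₁ : (Fin d → ℝ) → ℝ) (βN : ℝ)
    (ℓ : Fin N → Bool) (q : Fin N → (Fin d → ℝ)) : ℝ :=
  (Real.exp (-βN * ∑ j : Fin N, Vpot V₀₀ V₁₁ (q j) (ℓ j) (ℓ (j + 1)))
      * (∏ j ∈ Finset.univ.filter (fun j : Fin N => ℓ j ≠ ℓ (j + 1)),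
          Real.sinh (βN * |V₀₁ (q j)|))
      * (∏ j ∈ (Finset.univ.filter (fun j : Fin N => ℓ j ≠ ℓ (j + 1)))ᶜ,
          Real.cosh (βN * |V₀₁ (q j)|)))
    / (Real.exp (-βN * ∑ j : Fin N, V₀₀ (q j))
      * ∏ j : Fin N, Real.cosh (βN * |V₀₁ (q j)|))

namespace Real

theorem sinh_le_mul_cosh {x : ℝ} (hx : 0 ≤ x) : sinh x ≤ x * cosh x := by
  have hderiv (y : ℝ) : HasDerivAt (fun y => y * cosh y - sinh y) (y * sinh y) y :=
    (((hasDerivAt_id' y).fun_mul (hasDerivAt_cosh y)).fun_sub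
      (hasDerivAt_sinh y)).congr_deriv (by ring)
  have hmono : MonotoneOn (fun y => y * cosh y - sinh y) (Set.Ici 0) := by
    refine monotoneOn_of_deriv_nonneg (convex_Ici 0)
      (fun y _ => (hderiv y).continuousAt.continuousWithinAt)
      (fun y _ => (hderiv y).differentiableAt.differentiableWithinAt) fun y hy => ?_
    rw [interior_Ici] at hy
    rw [(hderiv y).deriv]
    exact mul_nonneg hy.le (sinh_nonneg_iff.2 hy.le)
  simpa using hmono Set.self_mem_Ici hx hx

theorem tanh_le_self {x : ℝ} (hx : 0 ≤ x) : tanh x ≤ x := by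
  rw [tanh_eq_sinh_div_cosh, div_le_iff₀ (cosh_pos x)]
  exact sinh_le_mul_cosh hx

theorem tanh_nonneg {x : ℝ} (hx : 0 ≤ x) : 0 ≤ tanh x := by
  rw [tanh_eq_sinh_div_cosh]
  exact div_nonneg (sinh_nonneg_iff.2 hx) (cosh_pos x).le

end Real

section Kinks

variable {N : ℕ} [NeZero N]

def kinkSet (ℓ : Fin N → Bool) : Finset (Fin N) :=
  univ.filter fun j => ℓ j ≠ ℓ (j + 1)

theorem card_kinkSet (ℓ : Fin N → Bool) : (kinkSet ℓ).card = kinkCount ℓ := rfl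

open Fin.NatCast in
theorem eq_of_apply_zero_eq_of_kinkSet_eq {ℓ ℓ' : Fin N → Bool} (h0 : ℓ 0 = ℓ' 0)
    (hkinks : kinkSet ℓ = kinkSet ℓ') : ℓ = ℓ' := by
  have hstep (j : Fin N) (hj : ℓ j = ℓ' j) : ℓ (j + 1) = ℓ' (j + 1) := by
    have hiff : ℓ j ≠ ℓ (j + 1) ↔ ℓ' j ≠ ℓ' (j + 1) := by
      simpa [kinkSet] using congrArg (j ∈ ·) hkinks
    rw [hj] at hiff
    revert hiff
    cases ℓ' j <;> cases ℓ (j + 1) <;> cases ℓ' (j + 1) <;> decide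
  have hcast (n : ℕ) : ℓ (n : Fin N) = ℓ' (n : Fin N) := by
    induction n with
    | zero => simpa using h0
    | succ n ih => simpa using hstep (n : Fin N) ih
  funext j
  simpa using hcast j

theorem card_filter_kinkCount_eq_le (m : ℕ) :
    (univ.filter fun ℓ : Fin N → Bool => kinkCount ℓ = m).card ≤ 2 * N.choose m := by
  calc (univ.filter fun ℓ : Fin N → Bool => kinkCount ℓ = m).card
      ≤ (univ ×ˢ (univ : Finset (Fin N)).powersetCard m : Finset (Bool × Finset (Fin N))).card := by
        refine card_le_card_of_injOn (fun ℓ => (ℓ 0, kinkSet ℓ)) (fun ℓ hℓ => ?_)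
          fun ℓ _ ℓ' _ h => eq_of_apply_zero_eq_of_kinkSet_eq (Prod.ext_iff.1 h).1
            (Prod.ext_iff.1 h).2
        simpa [mem_powersetCard, card_kinkSet] using hℓ
    _ = 2 * N.choose m := by simp

end Kinks

theorem sub_Vpot_le {d : ℕ} {V₀₀ V₁₁ : (Fin d → ℝ) → ℝ} {C₁ : ℝ} (hC₁ : 0 ≤ C₁)
    (hdiff : ∀ q, V₀₀ q - V₁₁ q ≤ C₁) (q : Fin d → ℝ) (b b' : Bool) :
    V₀₀ q - Vpot V₀₀ V₁₁ q b b' ≤ C₁ := by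
  have := hdiff q
  unfold Vpot
  split_ifs <;> linarith

section WeightRatio

variable {d N : ℕ} [NeZero N] (V₀₀ V₁₁ V₀₁ : (Fin d → ℝ) → ℝ) (βN : ℝ)
  (ℓ : Fin N → Bool) (q : Fin N → (Fin d → ℝ))

theorem weightRatio_eq :
    weightRatio V₀₀ V₁₁ V₀₁ βN ℓ q =
      Real.exp (βN * ∑ j, (V₀₀ (q j) - Vpot V₀₀ V₁₁ (q j) (ℓ j) (ℓ (j + 1)))) *
        ∏ j ∈ kinkSet ℓ, Real.tanh (βN * |V₀₁ (q j)|) := by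
  have hcosh : 0 < ∏ j ∈ (kinkSet ℓ)ᶜ, Real.cosh (βN * |V₀₁ (q j)|) :=
    prod_pos fun j _ => Real.cosh_pos _
  simp only [Real.tanh_eq_sinh_div_cosh, prod_div_distrib]
  rw [weightRatio, show univ.filter (fun j => ℓ j ≠ ℓ (j + 1)) = kinkSet ℓ from rfl,
    ← prod_mul_prod_compl (kinkSet ℓ), ← mul_assoc (Real.exp _),
    mul_div_mul_right _ _ hcosh.ne', mul_div_mul_comm, ← Real.exp_sub, sum_sub_distrib]
  congr 2
  ring

theorem weightRatio_nonneg (hβN : 0 ≤ βN) : 0 ≤ weightRatio V₀₀ V₁₁ V₀₁ βN ℓ q := by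
  rw [weightRatio_eq]
  exact mul_nonneg (Real.exp_pos _).le
    (prod_nonneg fun j _ => Real.tanh_nonneg (mul_nonneg hβN (abs_nonneg _)))

theorem weightRatio_le {C₁ C₂ : ℝ} (hC₁ : 0 ≤ C₁) (hdiff : ∀ q, V₀₀ q - V₁₁ q ≤ C₁)
    (hoff : ∀ q, |V₀₁ q| ≤ C₂) (hβN : 0 ≤ βN) :
    weightRatio V₀₀ V₁₁ V₀₁ βN ℓ q ≤ Real.exp (βN * N * C₁) * (βN * C₂) ^ kinkCount ℓ := by
  have htanh (j : Fin N) : 0 ≤ Real.tanh (βN * |V₀₁ (q j)|) :=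
    Real.tanh_nonneg (mul_nonneg hβN (abs_nonneg _))
  rw [weightRatio_eq, ← card_kinkSet, ← prod_const]
  refine mul_le_mul (Real.exp_le_exp.2 ?_) (prod_le_prod (fun j _ => htanh j) fun j _ => ?_)
    (prod_nonneg fun j _ => htanh j) (Real.exp_pos _).le
  · calc βN * ∑ j, (V₀₀ (q j) - Vpot V₀₀ V₁₁ (q j) (ℓ j) (ℓ (j + 1)))
        ≤ βN * ∑ _j : Fin N, C₁ := by
          gcongr with j
          exact sub_Vpot_le hC₁ hdiff _ _ _
      _ = βN * N * C₁ := by simp [mul_assoc]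
  · calc Real.tanh (βN * |V₀₁ (q j)|) ≤ βN * |V₀₁ (q j)| :=
          Real.tanh_le_self (mul_nonneg hβN (abs_nonneg _))
      _ ≤ βN * C₂ := by gcongr; exact hoff _

end WeightRatio

theorem Nat.choose_mul_div_pow_le {n m : ℕ} {C : ℝ} (hC : 1 ≤ C) (hmn : m ≤ n) :
    n.choose m * (C / n) ^ m ≤ C ^ n / m ! := by
  have hnC : n * (C / n) ≤ C := by
    rcases eq_or_ne (n : ℝ) 0 with hn | hn
    · rw [hn, zero_mul]
      linarith
    · rw [mul_div_cancel₀ _ hn]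
  calc n.choose m * (C / n) ^ m ≤ n ^ m / m ! * (C / n) ^ m := by
        have := zero_le_one.trans hC
        gcongr
        exact Nat.choose_le_pow_div m n
    _ = (n * (C / n)) ^ m / m ! := by ring
    _ ≤ C ^ m / m ! := by gcongr
    _ ≤ C ^ n / m ! := by gcongr

/-- Estimate (4-12): the sub-estimator integrand
`B_k(q) = Σ_{|ℓ| = 2k} weightRatio(ℓ, q)` is uniformly bounded by
`2 C(N,2k) e^{C₁} (C/N)^{2k} ≤ 2 C^N e^{C₁}/(2k)!` where `C = M C₂`,
`M = cosh(C₂/N)`. -/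
theorem Bk_uniform_bound (d N : ℕ) [NeZero N] (k : ℕ) (h2k : 2 * k ≤ N)
    (C₁ C₂ : ℝ) (hC₁ : 0 < C₁) (hC₂ : 1 ≤ C₂)
    (V₀₀ V₁₁ V₀₁ : (Fin d → ℝ) → ℝ)
    (hdiff : ∀ q, V₀₀ q - V₁₁ q ≤ C₁)
    (hoff : ∀ q, 0 < |V₀₁ q| ∧ |V₀₁ q| ≤ C₂)
    (βN : ℝ) (hβN : βN = 1 / (N : ℝ))
    (q : Fin N → (Fin d → ℝ)) :
    let C : ℝ := Real.cosh (C₂ / (N : ℝ)) * C₂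
    |∑ ℓ ∈ Finset.univ.filter (fun ℓ : Fin N → Bool => kinkCount ℓ = 2 * k),
        weightRatio V₀₀ V₁₁ V₀₁ βN ℓ q|
      ≤ 2 * (N.choose (2 * k)) * Real.exp C₁ * (C / (N : ℝ)) ^ (2 * k) ∧
    2 * (N.choose (2 * k)) * Real.exp C₁ * (C / (N : ℝ)) ^ (2 * k)
      ≤ 2 * C ^ N * Real.exp C₁ / (Nat.factorial (2 * k)) := by
  intro C
  have hN : (N : ℝ) ≠ 0 := Nat.cast_ne_zero.2 (NeZero.ne N)
  have hβN₀ : 0 ≤ βN := by rw [hβN]; positivity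
  have hC₂C : C₂ ≤ C := le_mul_of_one_le_left (by linarith) (Real.one_le_cosh _)
  have hterm (ℓ : Fin N → Bool) (hℓ : kinkCount ℓ = 2 * k) :
      weightRatio V₀₀ V₁₁ V₀₁ βN ℓ q ≤ Real.exp C₁ * (C / N) ^ (2 * k) :=
    calc weightRatio V₀₀ V₁₁ V₀₁ βN ℓ q
        ≤ Real.exp (βN * N * C₁) * (βN * C₂) ^ kinkCount ℓ :=
          weightRatio_le V₀₀ V₁₁ V₀₁ βN ℓ q hC₁.le hdiff (fun q => (hoff q).2) hβN₀
      _ = Real.exp C₁ * (C₂ / N) ^ (2 * k) := by rw [hℓ, hβN]; field_simp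
      _ ≤ Real.exp C₁ * (C / N) ^ (2 * k) := by gcongr
  refine ⟨?_, ?_⟩
  · rw [abs_of_nonneg (sum_nonneg fun ℓ _ => weightRatio_nonneg V₀₀ V₁₁ V₀₁ βN ℓ q hβN₀)]
    calc _ ≤ (univ.filter fun ℓ : Fin N → Bool => kinkCount ℓ = 2 * k).card •
            (Real.exp C₁ * (C / N) ^ (2 * k)) :=
          sum_le_card_nsmul _ _ _ fun ℓ hℓ => hterm ℓ (mem_filter.1 hℓ).2
      _ ≤ (2 * N.choose (2 * k) : ℕ) * (Real.exp C₁ * (C / N) ^ (2 * k)) := by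
          rw [nsmul_eq_mul]
          gcongr
          exact card_filter_kinkCount_eq_le _
      _ = _ := by push_cast; ring
  · calc 2 * (N.choose (2 * k)) * Real.exp C₁ * (C / N) ^ (2 * k)
        = 2 * Real.exp C₁ * (N.choose (2 * k) * (C / N) ^ (2 * k)) := by ring
      _ ≤ 2 * Real.exp C₁ * (C ^ N / (2 * k)!) := by
          gcongr
          exact Nat.choose_mul_div_pow_le (by linarith) h2k
      _ = _ := by ring
end
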